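/- arXiv:2209.11347 — 3 statements merged into one kernel-verified Lean document; each statement's English description precedes it below -/
import Mathlib

section
/- If π is an R-spread measure on subsets of X and A₀, A are independent samples from π, then for every conditioning on A (i.e. pointwise in A) and every ℓ ≥ 1, P(|A₀ ∩ A| = ℓ | A) ≤ (e|A|/(Rℓ))^ℓ. -/
/-!
Every `A₀` with `|A₀ ∩ A| = ℓ` contains the `ℓ`-subset `S = A₀ ∩ A` of `A`, so a union bound over
the `binom(|A|, ℓ)` such sets `S`, each contained in `A₀` with probability at most `R^{-ℓ}` by
spreadness, gives `binom(|A|, ℓ) / R^ℓ`; conclude with `binom(n, ℓ) ≤ (e n / ℓ)^ℓ`.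
-/

open Finset

open scoped Nat in
theorem Nat.choose_le_exp_one_mul_div_pow (n k : ℕ) :
    (n.choose k : ℝ) ≤ (Real.exp 1 * n / k) ^ k := by
  rcases k.eq_zero_or_pos with rfl | hk
  · simp
  have hfactorial : (k : ℝ) ^ k / k ! ≤ Real.exp 1 ^ k := by
    rw [← Real.exp_nat_mul, mul_one]
    exact Real.pow_div_factorial_le_exp _ k.cast_nonneg k
  calc (n.choose k : ℝ) ≤ (n : ℝ) ^ k / k ! := Nat.choose_le_pow_div k n
    _ = ((n : ℝ) / k) ^ k * ((k : ℝ) ^ k / k !) := by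
        rw [div_pow, div_mul_div_cancel₀ (by positivity)]
    _ ≤ ((n : ℝ) / k) ^ k * Real.exp 1 ^ k := by gcongr
    _ = (Real.exp 1 * n / k) ^ k := by ring

theorem Finset.sum_card_inter_eq_le_sum_powersetCard {α : Type*} [Fintype α] [DecidableEq α]
    (f : Finset α → ℝ) (hf : ∀ B, 0 ≤ f B) (A : Finset α) (ℓ : ℕ) :
    ∑ B with (B ∩ A).card = ℓ, f B ≤ ∑ S ∈ A.powersetCard ℓ, ∑ B with S ⊆ B, f B := by
  have hmaps : ∀ B ∈ ({B | (B ∩ A).card = ℓ} : Finset (Finset α)), B ∩ A ∈ A.powersetCard ℓ :=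
    fun B hB => mem_powersetCard.2 ⟨inter_subset_right, (mem_filter.1 hB).2⟩
  rw [← sum_fiberwise_of_maps_to hmaps]
  refine sum_le_sum fun S _ => sum_le_sum_of_subset_of_nonneg ?_ fun B _ _ => hf B
  intro B hB
  simp only [mem_filter, mem_univ, true_and] at hB ⊢
  exact hB.2 ▸ inter_subset_left

theorem sum_card_inter_eq_le_choose_div_pow {X : Type*} [Fintype X] [DecidableEq X] (R : ℝ)
    (π : Finset X → ℝ) (hπ0 : ∀ A, 0 ≤ π A)
    (hspread : ∀ S : Finset X, ∑ A with S ⊆ A, π A ≤ 1 / R ^ S.card) (A : Finset X) (ℓ : ℕ) :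
    ∑ A₀ with (A₀ ∩ A).card = ℓ, π A₀ ≤ A.card.choose ℓ / R ^ ℓ :=
  calc ∑ A₀ with (A₀ ∩ A).card = ℓ, π A₀
      ≤ ∑ S ∈ A.powersetCard ℓ, ∑ A₀ with S ⊆ A₀, π A₀ :=
        sum_card_inter_eq_le_sum_powersetCard π hπ0 A ℓ
    _ ≤ ∑ _S ∈ A.powersetCard ℓ, 1 / R ^ ℓ :=
        sum_le_sum fun S hS => (mem_powersetCard.1 hS).2 ▸ hspread S
    _ = A.card.choose ℓ / R ^ ℓ := by
        rw [sum_const, card_powersetCard, nsmul_eq_mul, mul_one_div]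

theorem stmt1_general {X : Type*} [Fintype X] [DecidableEq X] (R : ℝ) (hR : 1 < R)
    (π : Finset X → ℝ) (hπ0 : ∀ A, 0 ≤ π A)
    (hspread : ∀ S : Finset X,
      ∑ A ∈ Finset.univ.filter (fun A : Finset X => S ⊆ A), π A ≤ 1 / R ^ S.card)
    (A : Finset X) (ℓ : ℕ) :
    ∑ A₀ ∈ Finset.univ.filter (fun A₀ : Finset X => (A₀ ∩ A).card = ℓ), π A₀ ≤
      (Real.exp 1 * A.card / (R * ℓ)) ^ ℓ :=
  calc ∑ A₀ ∈ Finset.univ.filter (fun A₀ : Finset X => (A₀ ∩ A).card = ℓ), π A₀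
      ≤ A.card.choose ℓ / R ^ ℓ := sum_card_inter_eq_le_choose_div_pow R π hπ0 hspread A ℓ
    _ ≤ (Real.exp 1 * A.card / ℓ) ^ ℓ / R ^ ℓ := by
        have : 0 < R := zero_lt_one.trans hR
        gcongr
        exact Nat.choose_le_exp_one_mul_div_pow _ _
    _ = (Real.exp 1 * A.card / (R * ℓ)) ^ ℓ := by rw [← div_pow, div_div, mul_comm (ℓ : ℝ)]

/-- If π is R-spread and A₀, A are independent samples from π, then
pointwise in A and for every ℓ ≥ 1, P(|A₀ ∩ A| = ℓ | A) ≤ (e|A|/(Rℓ))^ℓ. -/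
theorem stmt1 {X : Type*} [Fintype X] [DecidableEq X] (R : ℝ) (hR : 1 < R)
    (π : Finset X → ℝ) (hπ0 : ∀ A, 0 ≤ π A) (hπ1 : ∑ A : Finset X, π A = 1)
    (hspread : ∀ S : Finset X,
      ∑ A ∈ Finset.univ.filter (fun A : Finset X => S ⊆ A), π A ≤ 1 / R ^ S.card)
    (A : Finset X) (ℓ : ℕ) (hℓ : 1 ≤ ℓ) :
    ∑ A₀ ∈ Finset.univ.filter (fun A₀ : Finset X => (A₀ ∩ A).card = ℓ), π A₀ ≤
      (Real.exp 1 * A.card / (R * ℓ)) ^ ℓ :=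
  stmt1_general R hR π hπ0 hspread A ℓ
end

section
/- Let π be R-spread, p ∈ (0,1), δ = (pR)^{-1/3}, and suppose 7δ < 1. If A₀, A are independent samples from π, then E[ Σ_{ℓ > δ|A|} P(|A₀ ∩ A| = ℓ | A) / p^ℓ ] ≤ 6δ², where the expectation is over A ~ π and the sum over positive integers ℓ. -/
/-- truncated second moment bound. With δ = (pR)^{-1/3}, 7δ < 1,
E_{A~π}[ Σ_{ℓ > δ|A|} P(|A₀ ∩ A| = ℓ | A) / p^ℓ ] ≤ 6δ². -/
theorem stmt2 {X : Type*} [Fintype X] [DecidableEq X] (R : ℝ) (hR : 1 < R)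
    (π : Finset X → ℝ) (hπ0 : ∀ A, 0 ≤ π A) (hπ1 : ∑ A : Finset X, π A = 1)
    (hspread : ∀ S : Finset X,
      ∑ A ∈ Finset.univ.filter (fun A : Finset X => S ⊆ A), π A ≤ 1 / R ^ S.card)
    (p : ℝ) (hp : p ∈ Set.Ioo (0:ℝ) 1)
    (δ : ℝ) (hδ : δ = (p * R) ^ (-(1/3) : ℝ)) (h7 : 7 * δ < 1) :
    ∑ A : Finset X, π A *
      ∑ ℓ ∈ Finset.Icc 1 (Fintype.card X),
        (if δ * A.card < (ℓ : ℝ) then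
          (∑ A₀ ∈ Finset.univ.filter (fun A₀ : Finset X => (A₀ ∩ A).card = ℓ), π A₀) / p ^ ℓ
         else 0) ≤ 6 * δ ^ 2 := by
  obtain ⟨hp0, hp1⟩ := hp
  have hR0 : (0:ℝ) < R := lt_trans one_pos hR
  have hpR : 0 < p * R := mul_pos hp0 hR0
  have hδ0 : 0 < δ := by rw [hδ]; exact Real.rpow_pos_of_pos hpR _
  have hδ3 : δ ^ 3 = (p * R)⁻¹ := by
    rw [hδ, ← Real.rpow_natCast ((p*R) ^ (-(1/3):ℝ)) 3, ← Real.rpow_mul hpR.le]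
    norm_num
    rw [Real.rpow_neg hpR.le, Real.rpow_one, mul_inv, mul_comm]
  set e : ℝ := Real.exp 1 with he
  have he1 : e < 2.7182818286 := Real.exp_one_lt_d9
  have he0 : 0 < e := Real.exp_pos 1
  set q : ℝ := e * δ ^ 2 with hq
  have hq0 : 0 ≤ q := by positivity
  have hqlt : q < 1/17 := by nlinarith
  have h1q : 0 < 1 - q := by linarith
  -- inner bound per A
  have key : ∀ A : Finset X,
      (∑ ℓ ∈ Finset.Icc 1 (Fintype.card X),
        (if δ * A.card < (ℓ : ℝ) then
          (∑ A₀ ∈ Finset.univ.filter (fun A₀ : Finset X => (A₀ ∩ A).card = ℓ), π A₀) / p ^ ℓ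
         else 0)) ≤ 6 * δ ^ 2 := by
    intro A
    have step : ∀ ℓ ∈ Finset.Icc 1 (Fintype.card X),
        (if δ * A.card < (ℓ : ℝ) then
          (∑ A₀ ∈ Finset.univ.filter (fun A₀ : Finset X => (A₀ ∩ A).card = ℓ), π A₀) / p ^ ℓ
         else 0) ≤ q ^ ℓ := by
      intro ℓ hℓ
      split_ifs with hcond
      · -- spread bound
        have h2 : (∑ A₀ ∈ Finset.univ.filter (fun A₀ : Finset X => (A₀ ∩ A).card = ℓ), π A₀)
            ≤ ∑ S ∈ A.powersetCard ℓ,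
                ∑ A₀ ∈ Finset.univ.filter (fun A₀ : Finset X => S ⊆ A₀), π A₀ := by
          rw [← Finset.sum_sigma (A.powersetCard ℓ)
              (fun S => Finset.univ.filter (fun A₀ : Finset X => S ⊆ A₀))
              (fun x => π x.2)]
          have hinj : ∀ a ∈ Finset.univ.filter (fun A₀ : Finset X => (A₀ ∩ A).card = ℓ),
              ∀ b ∈ Finset.univ.filter (fun A₀ : Finset X => (A₀ ∩ A).card = ℓ),
              (⟨a ∩ A, a⟩ : Σ _ : Finset X, Finset X) = ⟨b ∩ A, b⟩ → a = b := by
            intro a _ b _ hab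
            exact congrArg (fun x : Σ _ : Finset X, Finset X => x.2) hab
          have himg := Finset.sum_image (f := fun x : Σ _ : Finset X, Finset X => π x.2)
              (g := fun A₀ : Finset X => (⟨A₀ ∩ A, A₀⟩ : Σ _ : Finset X, Finset X)) hinj
          rw [← himg]
          apply Finset.sum_le_sum_of_subset_of_nonneg
          · intro x hx
            simp only [Finset.mem_image, Finset.mem_filter, Finset.mem_univ, true_and] at hx
            obtain ⟨A₀, hA₀, rfl⟩ := hx
            simp only [Finset.mem_sigma, Finset.mem_powersetCard, Finset.mem_filter,
              Finset.mem_univ, true_and]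
            exact ⟨⟨Finset.inter_subset_right, hA₀⟩, Finset.inter_subset_left⟩
          · intro x _ _
            exact hπ0 _
        have h3 : (∑ A₀ ∈ Finset.univ.filter (fun A₀ : Finset X => (A₀ ∩ A).card = ℓ), π A₀)
            ≤ (A.card.choose ℓ : ℝ) / R ^ ℓ := by
          refine h2.trans ?_
          calc ∑ S ∈ A.powersetCard ℓ,
                ∑ A₀ ∈ Finset.univ.filter (fun A₀ : Finset X => S ⊆ A₀), π A₀
              ≤ ∑ S ∈ A.powersetCard ℓ, 1 / R ^ ℓ := by
                refine Finset.sum_le_sum fun S hS => ?_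
                have := hspread S
                rwa [(Finset.mem_powersetCard.mp hS).2] at this
            _ = (A.card.choose ℓ : ℝ) / R ^ ℓ := by
                rw [Finset.sum_const, Finset.card_powersetCard]
                simp [div_eq_mul_inv, mul_comm]
        have hℓ1 : 1 ≤ ℓ := (Finset.mem_Icc.mp hℓ).1
        have hℓ0 : (0:ℝ) < ℓ := by exact_mod_cast hℓ1
        have hn : (A.card : ℝ) ≤ (ℓ : ℝ) / δ := by
          rw [le_div_iff₀ hδ0]
          nlinarith
        have hnum : ∀ A₀ ∈ Finset.univ.filter (fun A₀ : Finset X => (A₀ ∩ A).card = ℓ),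
            0 ≤ π A₀ := fun A₀ _ => hπ0 A₀
        have hpow : ((ℓ:ℝ)/δ) ^ ℓ * (δ ^ 3) ^ ℓ = (ℓ:ℝ) ^ ℓ * (δ ^ 2) ^ ℓ := by
          rw [← mul_pow, ← mul_pow]
          congr 1
          field_simp
        calc (∑ A₀ ∈ Finset.univ.filter (fun A₀ : Finset X => (A₀ ∩ A).card = ℓ), π A₀) / p ^ ℓ
            ≤ ((A.card.choose ℓ : ℝ) / R ^ ℓ) / p ^ ℓ := by gcongr
          _ = (A.card.choose ℓ : ℝ) * ((p * R)⁻¹) ^ ℓ := by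
              rw [div_div, ← mul_pow, mul_comm R p, inv_pow, div_eq_mul_inv]
          _ = (A.card.choose ℓ : ℝ) * (δ ^ 3) ^ ℓ := by rw [hδ3]
          _ ≤ ((A.card : ℝ) ^ ℓ / (ℓ.factorial : ℝ)) * (δ ^ 3) ^ ℓ := by
              have h := Nat.choose_le_pow_div (α := ℝ) ℓ A.card
              push_cast at h
              gcongr
          _ ≤ (((ℓ:ℝ)/δ) ^ ℓ / (ℓ.factorial : ℝ)) * (δ ^ 3) ^ ℓ := by
              gcongr
          _ = ((ℓ:ℝ) ^ ℓ / (ℓ.factorial : ℝ)) * (δ ^ 2) ^ ℓ := by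
              rw [div_mul_eq_mul_div, div_mul_eq_mul_div, hpow]
          _ ≤ e ^ ℓ * (δ ^ 2) ^ ℓ := by
              have hexp : (ℓ:ℝ) ^ ℓ / (ℓ.factorial : ℝ) ≤ e ^ ℓ := by
                calc (ℓ:ℝ) ^ ℓ / (ℓ.factorial : ℝ) ≤ Real.exp ℓ :=
                    Real.pow_div_factorial_le_exp (ℓ:ℝ) ℓ.cast_nonneg ℓ
                  _ = e ^ ℓ := by rw [he, Real.exp_one_pow]
              gcongr
          _ = q ^ ℓ := by rw [hq, mul_pow]
      · positivity
    refine (Finset.sum_le_sum step).trans ?_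
    -- geometric sum bound
    set N := Fintype.card X
    have h1 : ∑ ℓ ∈ Finset.Icc 1 N, q ^ ℓ = q * ∑ j ∈ Finset.range N, q ^ j := by
      rw [← Finset.Ico_add_one_right_eq_Icc, Finset.sum_Ico_eq_sum_range]
      simp [pow_add, pow_one, Finset.mul_sum]
    have hgs : ∑ j ∈ Finset.range N, q ^ j ≤ 1 / (1 - q) := by
      have hne : q ≠ 1 := by nlinarith
      rw [geom_sum_eq hne]
      have heq : (q ^ N - 1) / (q - 1) = (1 - q ^ N) / (1 - q) := by
        rw [← neg_div_neg_eq]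
        ring_nf
      rw [heq]
      gcongr
      nlinarith [pow_nonneg hq0 N]
    rw [h1]
    calc q * ∑ j ∈ Finset.range N, q ^ j ≤ q * (1 / (1 - q)) := by gcongr
      _ ≤ 6 * δ ^ 2 := by
        rw [mul_one_div, div_le_iff₀ h1q]
        nlinarith [sq_nonneg δ]
  calc ∑ A : Finset X, π A *
      ∑ ℓ ∈ Finset.Icc 1 (Fintype.card X),
        (if δ * A.card < (ℓ : ℝ) then
          (∑ A₀ ∈ Finset.univ.filter (fun A₀ : Finset X => (A₀ ∩ A).card = ℓ), π A₀) / p ^ ℓ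
         else 0)
      ≤ ∑ A : Finset X, π A * (6 * δ ^ 2) :=
        Finset.sum_le_sum fun A _ => mul_le_mul_of_nonneg_left (key A) (hπ0 A)
    _ = 6 * δ ^ 2 := by rw [← Finset.sum_mul, hπ1, one_mul]
end

section
/- Spread lemma (one-step version / Theorem 'medium'): If π is an R-spread measure on subsets of a finite set X and p ∈ (0,1), then there exists a coupling P of A ~ π, A' ~ π and V ~ Q_p under which A and V are independent, A' ⊆ A ∪ V almost surely, and E[ (|A' \ V| / |A|) · 1{A ≠ ∅} ] ≤ 7/(pR)^{1/3}. -/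
/-!
Draw `A ~ π` and `V ~ Q_p` independently and, given `A ∪ V = T`, draw `A' ⊆ T` with probability
proportional to `π A' / p ^ |A'|`. The union `A ∪ V` has law `Q_p(T) W(T)` with
`W(T) = ∑_{B ⊆ T} π B / p ^ |B|`, so `A'` has law `π A' / p ^ |A'| · Q_p(A' ⊆ V) = π A'`.

Since `A' \ V ⊆ A ∩ A'`, the ratio `|A' \ V| / |A|` is at most `δ` unless `A'` is heavy,
`|A ∩ A'| > δ |A|`. The tilted mass `H` of the heavy sets below `A ∪ V` increases with `V` and
`1 / W` decreases, so by Harris `E_V[H / W] ≤ E_V[H] E_V[1 / W]`. Spreadness gives the Chernoff bound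
`E_V[H] ≤ (e / (δ p R)) ^ K` with `K ≥ 1`, and `∑_A π A E_V[1 / W(A ∪ V)] ≤ 1`. The choice
`δ = (p R) ^ (-1/3)` makes `δ + e δ²` at most `7 δ`.
-/

/-- The p-biased product measure on subsets of a finite set `X`. -/
def Qbias {X : Type*} [Fintype X] [DecidableEq X] (p : ℝ) (V : Finset X) : ℝ :=
  p ^ V.card * (1 - p) ^ (Fintype.card X - V.card)

open Finset

section Harris

variable {α : Type*} [DistribLattice α] [OrderBot α] [Fintype α]

theorem sum_mul_mul_le_of_monotone_of_antitone {μ f g : α → ℝ} (hμ₀ : 0 ≤ μ) (hf₀ : 0 ≤ f)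
    (hf : Monotone f) (hg : Antitone g) (hμ : ∀ a b, μ a * μ b ≤ μ (a ⊓ b) * μ (a ⊔ b)) :
    (∑ a, μ a) * ∑ a, μ a * (f a * g a) ≤ (∑ a, μ a * f a) * ∑ a, μ a * g a := by
  have key := fkg f (fun a => g ⊥ - g a) μ hμ₀ hf₀ (fun a => sub_nonneg.2 (hg bot_le))
    hf (fun a b hab => sub_le_sub_left (hg hab) _) hμ
  simp only [mul_sub, sum_sub_distrib, ← sum_mul, ← mul_assoc] at key ⊢
  linear_combination key

end Harris

section SpreadLemma

variable {X : Type*}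

section Qbias

variable [Fintype X] [DecidableEq X] {p : ℝ}

theorem Qbias_nonneg (hp0 : 0 ≤ p) (hp1 : p ≤ 1) (v : Finset X) : 0 ≤ Qbias p v :=
  mul_nonneg (pow_nonneg hp0 _) (pow_nonneg (sub_nonneg.2 hp1) _)

theorem Qbias_mul_Qbias (u v : Finset X) :
    Qbias p u * Qbias p v = Qbias p (u ∩ v) * Qbias p (u ∪ v) := by
  have := card_union_add_card_inter u v
  have := card_le_univ (u ∪ v)
  have := card_le_card (inter_subset_left (s₁ := u) (s₂ := v))
  have := card_le_card (subset_union_left (s₁ := u) (s₂ := v))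
  have := card_le_card (subset_union_right (s₁ := u) (s₂ := v))
  simp only [Qbias]
  rw [mul_mul_mul_comm, mul_mul_mul_comm (p ^ #(u ∩ v)), ← pow_add, ← pow_add, ← pow_add,
    ← pow_add]
  congr 2 <;> omega

theorem sum_Qbias_Icc {s t : Finset X} (hst : s ⊆ t) :
    ∑ v ∈ Icc s t, Qbias p v = p ^ #s * (1 - p) ^ #tᶜ := by
  have hdisj {u} (hu : u ∈ (t \ s).powerset) : Disjoint s u :=
    disjoint_of_subset_right (mem_powerset.1 hu) disjoint_sdiff
  rw [Icc_eq_image_powerset hst, sum_image fun u hu w hw h => by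
    rw [← union_sdiff_cancel_left (hdisj hu), h, union_sdiff_cancel_left (hdisj hw)]]
  have key : ∀ u ∈ (t \ s).powerset, Qbias p (s ∪ u)
      = p ^ #s * (1 - p) ^ #tᶜ * (p ^ #u * (1 - p) ^ (#(t \ s) - #u)) := by
    intro u hu
    have := card_le_card (mem_powerset.1 hu)
    have := card_le_univ t
    have := card_le_card hst
    rw [Qbias, card_union_of_disjoint (hdisj hu), card_compl, card_sdiff_of_subset hst] at *
    rw [mul_mul_mul_comm, ← pow_add, ← pow_add]
    congr 2
    omega
  rw [sum_congr rfl key, ← mul_sum, sum_pow_mul_eq_add_pow, add_sub_cancel, one_pow, mul_one]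

theorem sum_Qbias : ∑ v : Finset X, Qbias p v = 1 := by
  have := sum_Qbias_Icc (p := p) (empty_subset (univ : Finset X))
  rw [show Icc (∅ : Finset X) univ = univ from Icc_bot_top] at this
  simpa using this

theorem sum_Qbias_superset (s : Finset X) : ∑ v with s ⊆ v, Qbias p v = p ^ #s := by
  have := sum_Qbias_Icc (p := p) (subset_univ s)
  rw [show Icc s univ = univ.filter (s ⊆ ·) by ext; simp] at this
  simpa using this

theorem sum_Qbias_mul_union (hp : p ≠ 0) (a : Finset X) (F : Finset X → ℝ) :
    ∑ v, Qbias p v * F (a ∪ v) = ∑ T with a ⊆ T, Qbias p T / p ^ #a * F T := by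
  rw [← sum_fiberwise_of_maps_to (g := (a ∪ ·)) (t := {T | a ⊆ T}) (by simp)]
  refine sum_congr rfl fun T hT => ?_
  have haT : a ⊆ T := (mem_filter.1 hT).2
  have hfiber : ({v | a ∪ v = T} : Finset _) = Icc (T \ a) T := by
    ext v
    simp only [mem_filter, mem_univ, true_and, mem_Icc]
    constructor
    · rintro rfl
      exact ⟨sdiff_le_iff.2 le_rfl, subset_union_right⟩
    · rintro ⟨h1, h2⟩
      exact subset_antisymm (union_subset haT h2) (sdiff_le_iff.1 h1)
  rw [sum_congr rfl fun v hv => by rw [(mem_filter.1 hv).2], ← sum_mul, hfiber,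
    sum_Qbias_Icc sdiff_subset, Qbias, card_sdiff_of_subset haT, card_compl,
    pow_sub₀ _ hp (card_le_card haT)]
  ring

end Qbias

section Spread

variable [Fintype X] [DecidableEq X]

def IsSpread (R : ℝ) (π : Finset X → ℝ) : Prop :=
  ∀ S : Finset X, ∑ A ∈ univ.filter (fun A : Finset X => S ⊆ A), π A ≤ 1 / R ^ S.card

theorem IsSpread.sum_mul_pow_card_inter_le {R : ℝ} {π : Finset X → ℝ} (hπ : IsSpread R π)
    (a : Finset X) {y : ℝ} (hy : 0 ≤ y) :
    ∑ b, π b * (1 + y) ^ #(a ∩ b) ≤ (1 + y / R) ^ #a := by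
  have hexpand (b : Finset X) : (1 + y) ^ #(a ∩ b) = ∑ S ∈ a.powerset with S ⊆ b, y ^ #S := by
    rw [show a.powerset.filter (· ⊆ b) = (a ∩ b).powerset by
      ext; simp only [mem_filter, mem_powerset, subset_inter_iff],
      add_comm, ← sum_pow_mul_eq_add_pow]
    simp
  calc ∑ b, π b * (1 + y) ^ #(a ∩ b)
      = ∑ S ∈ a.powerset, (∑ b with S ⊆ b, π b) * y ^ #S := by
        simp_rw [hexpand, mul_sum, sum_filter, sum_mul, ite_mul, zero_mul]
        exact sum_comm
    _ ≤ ∑ S ∈ a.powerset, 1 / R ^ #S * y ^ #S :=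
        sum_le_sum fun S _ => mul_le_mul_of_nonneg_right (hπ S) (pow_nonneg hy _)
    _ = (1 + y / R) ^ #a := by
        rw [add_comm, ← sum_pow_mul_eq_add_pow]
        simp [div_eq_inv_mul, mul_pow]

end Spread

section Tilt

variable (p : ℝ) (π : Finset X → ℝ)

noncomputable def tilt (b : Finset X) : ℝ := π b / p ^ #b

variable {p π} in
theorem tilt_nonneg (hp : 0 ≤ p) (hπ : ∀ A, 0 ≤ π A) (b : Finset X) :
    0 ≤ tilt p π b :=
  div_nonneg (hπ b) (pow_nonneg hp _)

variable [DecidableEq X]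

noncomputable def tiltedMass (𝒜 : Finset (Finset X)) (T : Finset X) : ℝ :=
  ∑ b ∈ 𝒜 with b ⊆ T, tilt p π b

variable {p π}

theorem tiltedMass_nonneg (hp : 0 ≤ p) (hπ : ∀ A, 0 ≤ π A) (𝒜 : Finset (Finset X))
    (T : Finset X) : 0 ≤ tiltedMass p π 𝒜 T :=
  sum_nonneg fun b _ => tilt_nonneg hp hπ b

theorem tiltedMass_mono (hp : 0 ≤ p) (hπ : ∀ A, 0 ≤ π A) (𝒜 : Finset (Finset X)) :
    Monotone (tiltedMass p π 𝒜) := fun _ _ hT =>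
  sum_le_sum_of_subset_of_nonneg
    (fun b hb => by rw [mem_filter] at hb ⊢; exact ⟨hb.1, hb.2.trans hT⟩)
    fun b _ _ => tilt_nonneg hp hπ b

variable [Fintype X]

variable (p π) in
noncomputable def resample (T b : Finset X) : ℝ :=
  if b ⊆ T then tilt p π b / tiltedMass p π univ T else 0

theorem tilt_le_tiltedMass (hp : 0 ≤ p) (hπ : ∀ A, 0 ≤ π A) {b T : Finset X} (hb : b ⊆ T) :
    tilt p π b ≤ tiltedMass p π univ T :=
  single_le_sum (fun b _ => tilt_nonneg hp hπ b) (by simpa using hb)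

theorem tiltedMass_pos (hp : 0 < p) (hπ : ∀ A, 0 ≤ π A) {a T : Finset X} (ha : 0 < π a)
    (haT : a ⊆ T) : 0 < tiltedMass p π univ T :=
  (div_pos ha (pow_pos hp _)).trans_le (tilt_le_tiltedMass hp.le hπ haT)

theorem resample_nonneg (hp : 0 ≤ p) (hπ : ∀ A, 0 ≤ π A) (T b : Finset X) :
    0 ≤ resample p π T b := by
  unfold resample
  split_ifs
  exacts [div_nonneg (tilt_nonneg hp hπ b) (tiltedMass_nonneg hp hπ _ T), le_rfl]

theorem sum_resample (𝒜 : Finset (Finset X)) (T : Finset X) :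
    ∑ b ∈ 𝒜, resample p π T b = tiltedMass p π 𝒜 T / tiltedMass p π univ T := by
  simp only [resample, tiltedMass, sum_div, sum_filter, ite_div, zero_div]

theorem sum_resample_le_one (T : Finset X) : ∑ b, resample p π T b ≤ 1 :=
  (sum_resample univ T).trans_le (div_self_le_one _)

theorem tiltedMass_mul_resample (hp : 0 ≤ p) (hπ : ∀ A, 0 ≤ π A) (T b : Finset X) :
    tiltedMass p π univ T * resample p π T b = if b ⊆ T then tilt p π b else 0 := by
  unfold resample
  split_ifs with hb
  · rcases (tiltedMass_nonneg hp hπ univ T).eq_or_lt with h | h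
    · have := tilt_le_tiltedMass hp hπ hb
      rw [← h] at this ⊢
      linarith [tilt_nonneg hp hπ b]
    · field_simp
  · rw [mul_zero]

theorem sum_pi_mul_Qbias_mul_union (hp : p ≠ 0) (F : Finset X → ℝ) :
    ∑ a, ∑ v, π a * Qbias p v * F (a ∪ v) = ∑ T, Qbias p T * tiltedMass p π univ T * F T := by
  simp_rw [mul_assoc, ← mul_sum, sum_Qbias_mul_union hp, mul_sum, tiltedMass, sum_mul, sum_filter]
  rw [sum_comm]
  refine sum_congr rfl fun T _ => ?_
  rw [mul_sum]
  refine sum_congr rfl fun a _ => ?_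
  split_ifs
  · rw [tilt]; ring
  · rw [mul_zero]

end Tilt

section Coupling

variable [Fintype X] [DecidableEq X] {p : ℝ} {π : Finset X → ℝ}

variable (p π) in
noncomputable def spreadCoupling (w : Finset X × Finset X × Finset X) : ℝ :=
  π w.1 * Qbias p w.2.2 * resample p π (w.1 ∪ w.2.2) w.2.1

theorem spreadCoupling_nonneg (hp0 : 0 ≤ p) (hp1 : p ≤ 1) (hπ : ∀ A, 0 ≤ π A)
    (w : Finset X × Finset X × Finset X) : 0 ≤ spreadCoupling p π w :=
  mul_nonneg (mul_nonneg (hπ _) (Qbias_nonneg hp0 hp1 _)) (resample_nonneg hp0 hπ _ _)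

theorem spreadCoupling_eq_zero {a b v : Finset X} (h : ¬ b ⊆ a ∪ v) :
    spreadCoupling p π (a, b, v) = 0 := by
  simp [spreadCoupling, resample, h]

theorem sum_spreadCoupling_snd (hp : 0 < p) (hπ : ∀ A, 0 ≤ π A) (a v : Finset X) :
    ∑ b, spreadCoupling p π (a, b, v) = π a * Qbias p v := by
  simp only [spreadCoupling, ← mul_sum]
  rcases (hπ a).eq_or_lt with h | h
  · simp [← h]
  · rw [sum_resample, div_self (tiltedMass_pos hp hπ h subset_union_left).ne', mul_one]

theorem sum_spreadCoupling (hp : 0 < p) (hπ : ∀ A, 0 ≤ π A) (hπ1 : ∑ A, π A = 1) :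
    ∑ w, spreadCoupling p π w = 1 := by
  simp_rw [Fintype.sum_prod_type]
  rw [sum_congr rfl fun a _ => sum_comm]
  simp_rw [sum_spreadCoupling_snd hp hπ, ← mul_sum, sum_Qbias, mul_one, hπ1]

theorem sum_sum_spreadCoupling_fst (hp : 0 < p) (hπ : ∀ A, 0 ≤ π A) (b : Finset X) :
    ∑ a, ∑ v, spreadCoupling p π (a, b, v) = π b :=
  calc ∑ a, ∑ v, spreadCoupling p π (a, b, v)
      = ∑ T, Qbias p T * tiltedMass p π univ T * resample p π T b :=
        sum_pi_mul_Qbias_mul_union hp.ne' (resample p π · b)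
    _ = tilt p π b * ∑ T with b ⊆ T, Qbias p T := by
        simp_rw [mul_assoc, tiltedMass_mul_resample hp.le hπ, sum_filter, mul_sum, mul_ite,
          mul_zero, mul_comm (Qbias p _)]
    _ = π b := by rw [sum_Qbias_superset, tilt, div_mul_cancel₀ _ (pow_ne_zero _ hp.ne')]

end Coupling

section Expectation

variable [Fintype X] [DecidableEq X] {p R δ : ℝ} {π : Finset X → ℝ}

noncomputable def heavy (δ : ℝ) (a : Finset X) : Finset (Finset X) := {b | δ * #a < #(a ∩ b)}

theorem card_sdiff_div_card_le_one {a b v : Finset X} (h : b ⊆ a ∪ v) :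
    (#(b \ v) : ℝ) / #a ≤ 1 :=
  div_le_one_of_le₀ (by exact_mod_cast card_le_card (sdiff_le_iff'.2 h)) (Nat.cast_nonneg _)

theorem card_sdiff_div_card_le (hδ : 0 ≤ δ) {a b v : Finset X} (h : b ⊆ a ∪ v) :
    (#(b \ v) : ℝ) / #a ≤ δ + if b ∈ heavy δ a then 1 else 0 := by
  split_ifs with hb
  · linarith [card_sdiff_div_card_le_one h]
  · have hle : (#(b \ v) : ℝ) ≤ #(a ∩ b) := by
      exact_mod_cast card_le_card (subset_inter (sdiff_le_iff'.2 h) sdiff_subset)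
    simp only [heavy, mem_filter, mem_univ, true_and, not_lt] at hb
    rw [add_zero]
    exact div_le_of_le_mul₀ (Nat.cast_nonneg _) hδ (by linarith)

theorem sum_resample_mul_card_sdiff_div_le (hp : 0 ≤ p) (hπ : ∀ A, 0 ≤ π A) (hδ : 0 ≤ δ)
    (a v : Finset X) :
    ∑ b, resample p π (a ∪ v) b * ((#(b \ v) : ℝ) / #a)
      ≤ δ + tiltedMass p π (heavy δ a) (a ∪ v) / tiltedMass p π univ (a ∪ v) :=
  calc ∑ b, resample p π (a ∪ v) b * ((#(b \ v) : ℝ) / #a)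
      ≤ ∑ b, resample p π (a ∪ v) b * (δ + if b ∈ heavy δ a then 1 else 0) := by
        refine sum_le_sum fun b _ => ?_
        by_cases h : b ⊆ a ∪ v
        · exact mul_le_mul_of_nonneg_left (card_sdiff_div_card_le hδ h) (resample_nonneg hp hπ _ _)
        · simp [resample, h]
    _ = δ * ∑ b, resample p π (a ∪ v) b + ∑ b ∈ heavy δ a, resample p π (a ∪ v) b := by
        simp_rw [mul_add, sum_add_distrib, mul_sum, mul_ite, mul_one, mul_zero, sum_ite_mem,
          univ_inter, mul_comm]
    _ ≤ δ + tiltedMass p π (heavy δ a) (a ∪ v) / tiltedMass p π univ (a ∪ v) := by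
        rw [sum_resample (heavy δ a)]
        gcongr
        exact mul_le_of_le_one_right hδ (sum_resample_le_one _)

theorem sum_Qbias_mul_tiltedMass_heavy (hp : 0 < p) (a : Finset X) :
    ∑ v, Qbias p v * tiltedMass p π (heavy δ a) (a ∪ v) = ∑ b ∈ heavy δ a, π b / p ^ #(a ∩ b) := by
  simp_rw [tiltedMass, sum_filter, mul_sum]
  rw [sum_comm]
  refine sum_congr rfl fun b _ => ?_
  have hunion (v : Finset X) : b ⊆ a ∪ v ↔ b \ a ⊆ v := sdiff_le_iff.symm
  have hcard : #(a ∩ b) + #(b \ a) = #b := by rw [inter_comm, card_inter_add_card_sdiff]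
  simp_rw [hunion, mul_ite, mul_zero, ← sum_filter, ← sum_mul, sum_Qbias_superset, tilt, ← hcard,
    pow_add]
  field_simp

theorem IsSpread.sum_heavy_div_pow_le (hspread : IsSpread R π) (hπ : ∀ A, 0 ≤ π A) (hp0 : 0 < p)
    (hp1 : p ≤ 1) (hR : 0 < R) (hδ : 0 ≤ δ) (ht : 1 ≤ δ * (p * R)) (a : Finset X) :
    ∑ b ∈ heavy δ a, π b / p ^ #(a ∩ b) ≤ (Real.exp 1 / (δ * (p * R))) ^ (⌊δ * #a⌋₊ + 1) := by
  set t := δ * (p * R)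
  set K := ⌊δ * #a⌋₊ + 1
  have ht0 : 0 < t := one_pos.trans_le ht
  have hδR : 1 ≤ δ * R := ht.trans (by nlinarith)
  -- Markov's trick: `t ^ K ≤ t ^ |a ∩ b|` on heavy sets
  have hterm (b : Finset X) (hb : b ∈ heavy δ a) :
      π b / p ^ #(a ∩ b) ≤ π b * (δ * R) ^ #(a ∩ b) / t ^ K := by
    have hK : K ≤ #(a ∩ b) := by
      simp only [heavy, mem_filter, mem_univ, true_and] at hb
      exact Nat.succ_le_of_lt ((Nat.floor_lt (by positivity)).2 hb)
    have htp : t / (δ * R) = p := by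
      rw [div_eq_iff (one_pos.trans_le hδR).ne']
      ring
    rw [← htp, div_pow, div_div_eq_mul_div]
    exact div_le_div_of_nonneg_left (mul_nonneg (hπ b) (by positivity)) (by positivity)
      (pow_le_pow_right₀ ht hK)
  calc ∑ b ∈ heavy δ a, π b / p ^ #(a ∩ b)
      ≤ ∑ b, π b * (1 + (δ * R - 1)) ^ #(a ∩ b) / t ^ K := by
        simp_rw [add_sub_cancel]
        exact (sum_le_sum hterm).trans (sum_le_sum_of_subset_of_nonneg (subset_univ _)
          fun b _ _ => div_nonneg (mul_nonneg (hπ b) (pow_nonneg (by linarith) _)) (by positivity))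
    _ ≤ (1 + (δ * R - 1) / R) ^ #a / t ^ K := by
        rw [← sum_div]
        gcongr
        exact hspread.sum_mul_pow_card_inter_le a (by linarith)
    _ ≤ Real.exp 1 ^ K / t ^ K := by
        gcongr
        calc (1 + (δ * R - 1) / R) ^ #a ≤ Real.exp δ ^ #a := by
              gcongr
              have : (δ * R - 1) / R ≤ δ := by
                rw [div_le_iff₀ hR]
                linarith
              linarith [Real.add_one_le_exp δ]
          _ = Real.exp (δ * #a) := by rw [← Real.exp_nat_mul, mul_comm]
          _ ≤ Real.exp 1 ^ K := by
              rw [← Real.exp_nat_mul, mul_one]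
              refine Real.exp_le_exp.2 ?_
              simp only [K]
              push_cast
              exact (Nat.lt_floor_add_one _).le
    _ = (Real.exp 1 / t) ^ K := (div_pow _ _ _).symm

theorem sum_Qbias_mul_tiltedMass_heavy_div_le (hπ : ∀ A, 0 ≤ π A) (hspread : IsSpread R π)
    (hp0 : 0 < p) (hp1 : p ≤ 1) (hR : 0 < R) (hδ : 0 ≤ δ) (he : Real.exp 1 ≤ δ * (p * R)) {a : Finset X}
    (ha : 0 < π a) :
    ∑ v, Qbias p v * (tiltedMass p π (heavy δ a) (a ∪ v) / tiltedMass p π univ (a ∪ v))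
      ≤ Real.exp 1 / (δ * (p * R)) * ∑ v, Qbias p v * (tiltedMass p π univ (a ∪ v))⁻¹ := by
  have ht : 1 ≤ δ * (p * R) := (Real.one_lt_exp_iff.2 one_pos).le.trans he
  have harris := sum_mul_mul_le_of_monotone_of_antitone (μ := Qbias p)
    (f := fun v => tiltedMass p π (heavy δ a) (a ∪ v))
    (g := fun v => (tiltedMass p π univ (a ∪ v))⁻¹)
    (Qbias_nonneg hp0.le hp1) (fun v => tiltedMass_nonneg hp0.le hπ _ _)
    (fun u v huv => tiltedMass_mono hp0.le hπ _ (sup_le_sup_left huv a))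
    (fun u v huv => inv_anti₀ (tiltedMass_pos hp0 hπ ha subset_union_left)
      (tiltedMass_mono hp0.le hπ _ (sup_le_sup_left huv a)))
    (fun u v => (Qbias_mul_Qbias u v).le)
  simp only [sum_Qbias, one_mul, ← div_eq_mul_inv] at harris
  refine harris.trans (mul_le_mul_of_nonneg_right ?_ (sum_nonneg fun v _ =>
    mul_nonneg (Qbias_nonneg hp0.le hp1 v) (inv_nonneg.2 (tiltedMass_nonneg hp0.le hπ _ _))))
  rw [sum_Qbias_mul_tiltedMass_heavy hp0]
  exact (hspread.sum_heavy_div_pow_le hπ hp0 hp1 hR hδ ht a).trans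
    (pow_le_of_le_one (by positivity) ((div_le_one (by linarith)).2 he) (Nat.succ_ne_zero _))

theorem sum_spreadCoupling_mul_card_sdiff_div_le (hπ : ∀ A, 0 ≤ π A) (hπ1 : ∑ A, π A = 1)
    (hspread : IsSpread R π) (hp0 : 0 < p) (hp1 : p ≤ 1) (hR : 0 < R) (hδ : 0 ≤ δ)
    (he : Real.exp 1 ≤ δ * (p * R)) :
    ∑ a, ∑ b, ∑ v, spreadCoupling p π (a, b, v) * ((#(b \ v) : ℝ) / #a)
      ≤ δ + Real.exp 1 / (δ * (p * R)) := by
  set W := tiltedMass p π univ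
  set ε := Real.exp 1 / (δ * (p * R))
  have hQ := Qbias_nonneg hp0.le hp1 (X := X)
  calc ∑ a, ∑ b, ∑ v, spreadCoupling p π (a, b, v) * ((#(b \ v) : ℝ) / #a)
      = ∑ a, π a * ∑ v, Qbias p v * ∑ b, resample p π (a ∪ v) b * ((#(b \ v) : ℝ) / #a) := by
        refine sum_congr rfl fun a _ => ?_
        rw [sum_comm, mul_sum]
        refine sum_congr rfl fun v _ => ?_
        rw [mul_sum, mul_sum]
        refine sum_congr rfl fun b _ => ?_
        rw [spreadCoupling]
        ring
    _ ≤ ∑ a, π a * ∑ v, Qbias p v * (δ + tiltedMass p π (heavy δ a) (a ∪ v) / W (a ∪ v)) :=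
        sum_le_sum fun a _ => mul_le_mul_of_nonneg_left (sum_le_sum fun v _ =>
          mul_le_mul_of_nonneg_left (sum_resample_mul_card_sdiff_div_le hp0.le hπ hδ a v) (hQ v))
          (hπ a)
    _ = δ + ∑ a, π a * ∑ v, Qbias p v * (tiltedMass p π (heavy δ a) (a ∪ v) / W (a ∪ v)) := by
        simp only [mul_add, sum_add_distrib, ← sum_mul, sum_Qbias, one_mul, hπ1]
    _ ≤ δ + ∑ a, π a * (ε * ∑ v, Qbias p v * (W (a ∪ v))⁻¹) := by
        refine add_le_add le_rfl (sum_le_sum fun a _ => ?_)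
        rcases (hπ a).eq_or_lt with h | h
        · simp [← h]
        · exact mul_le_mul_of_nonneg_left
            (sum_Qbias_mul_tiltedMass_heavy_div_le hπ hspread hp0 hp1 hR hδ he h) h.le
    _ = δ + ε * ∑ T, Qbias p T * W T * (W T)⁻¹ := by
        rw [← sum_pi_mul_Qbias_mul_union hp0.ne', mul_sum]
        simp_rw [mul_sum]
        exact congrArg _ (sum_congr rfl fun a _ => sum_congr rfl fun v _ => by ring)
    _ ≤ δ + ε * 1 := by
        gcongr
        rw [← sum_Qbias (p := p) (X := X)]
        exact sum_le_sum fun T _ => by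
          rw [mul_assoc]
          exact mul_le_of_le_one_right (hQ T) mul_inv_le_one
    _ = δ + ε := by rw [mul_one]

theorem sum_spreadCoupling_mul_card_sdiff_div_le_one (hπ : ∀ A, 0 ≤ π A) (hπ1 : ∑ A, π A = 1)
    (hp0 : 0 < p) (hp1 : p ≤ 1) :
    ∑ a, ∑ b, ∑ v, spreadCoupling p π (a, b, v) * ((#(b \ v) : ℝ) / #a) ≤ 1 :=
  calc ∑ a, ∑ b, ∑ v, spreadCoupling p π (a, b, v) * ((#(b \ v) : ℝ) / #a)
      ≤ ∑ a, ∑ b, ∑ v, spreadCoupling p π (a, b, v) := by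
        refine sum_le_sum fun a _ => sum_le_sum fun b _ => sum_le_sum fun v _ => ?_
        by_cases h : b ⊆ a ∪ v
        · exact mul_le_of_le_one_right (spreadCoupling_nonneg hp0.le hp1 hπ _)
            (card_sdiff_div_card_le_one h)
        · simp [spreadCoupling_eq_zero h]
    _ = 1 := by
        rw [← sum_spreadCoupling hp0 hπ hπ1]
        simp_rw [Fintype.sum_prod_type]

end Expectation

end SpreadLemma

/-- one-step spread lemma: if π is R-spread, there is a coupling P of
A ~ π, A' ~ π, V ~ Q_p with A, V independent, A' ⊆ A ∪ V a.s., and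
E[(|A' \ V|/|A|)·1{A ≠ ∅}] ≤ 7/(pR)^{1/3}. -/
theorem stmt10 {X : Type*} [Fintype X] [DecidableEq X] (R : ℝ) (hR : 1 < R)
    (p : ℝ) (hp : p ∈ Set.Ioo (0:ℝ) 1)
    (π : Finset X → ℝ) (hπ0 : ∀ A, 0 ≤ π A) (hπ1 : ∑ A : Finset X, π A = 1)
    (hspread : ∀ S : Finset X,
      ∑ A ∈ Finset.univ.filter (fun A : Finset X => S ⊆ A), π A ≤ 1 / R ^ S.card) :
    ∃ P : Finset X × Finset X × Finset X → ℝ,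
      (∀ w, 0 ≤ P w) ∧
      (∑ w : Finset X × Finset X × Finset X, P w = 1) ∧
      (∀ a v : Finset X, ∑ a' : Finset X, P (a, a', v) = π a * Qbias p v) ∧
      (∀ a' : Finset X, ∑ a : Finset X, ∑ v : Finset X, P (a, a', v) = π a') ∧
      (∀ a a' v : Finset X, ¬ a' ⊆ a ∪ v → P (a, a', v) = 0) ∧
      (∑ a : Finset X, ∑ a' : Finset X, ∑ v : Finset X,
          P (a, a', v) * (if a = ∅ then 0 else ((a' \ v).card : ℝ) / a.card)
        ≤ 7 / (p * R) ^ ((1:ℝ)/3)) := by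
  obtain ⟨hp0, hp1⟩ := hp
  refine ⟨spreadCoupling p π, spreadCoupling_nonneg hp0.le hp1.le hπ0,
    sum_spreadCoupling hp0 hπ0 hπ1, sum_spreadCoupling_snd hp0 hπ0,
    sum_sum_spreadCoupling_fst hp0 hπ0, fun _ _ _ => spreadCoupling_eq_zero, ?_⟩
  -- the guard is redundant: `x / #∅ = x / 0 = 0`
  have hratio (a b v : Finset X) :
      (if a = ∅ then 0 else (#(b \ v) : ℝ) / #a) = (#(b \ v) : ℝ) / #a := by
    split_ifs with h <;> simp [h]
  simp_rw [hratio]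
  set c := (p * R) ^ ((1:ℝ) / 3)
  have hc0 : 0 < c := by positivity
  rcases le_or_gt c 7 with hc7 | hc7
  · exact (sum_spreadCoupling_mul_card_sdiff_div_le_one hπ0 hπ1 hp0 hp1.le).trans
      ((one_le_div hc0).2 hc7)
  · have hc2 : c⁻¹ * (p * R) = c ^ 2 := by
      have hc3 : c ^ 3 = p * R := by
        rw [← Real.rpow_natCast, ← Real.rpow_mul (by positivity)]
        norm_num
      rw [← hc3]
      field_simp
    have he : Real.exp 1 < 3 := Real.exp_one_lt_d9.trans (by norm_num)
    calc _ ≤ c⁻¹ + Real.exp 1 / (c⁻¹ * (p * R)) :=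
          sum_spreadCoupling_mul_card_sdiff_div_le hπ0 hπ1 hspread hp0 hp1.le (by linarith)
            (inv_nonneg.2 hc0.le) (by rw [hc2]; nlinarith)
      _ ≤ 7 / c := by
          rw [hc2, inv_eq_one_div, div_add_div _ _ hc0.ne' (by positivity),
            div_le_div_iff₀ (by positivity) hc0]
          nlinarith [mul_pos hc0 hc0]
end
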